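/- arXiv:math/0604253 — 5 statements merged into one kernel-verified Lean document; each statement's English description precedes it below -/
import Mathlib

section
/- The function p : ℝ → ℝ defined by p(x) = exp(-|x|) is positive definite: for any n and any real numbers x₁,…,xₙ, the symmetric n×n matrix with entries exp(-|xᵢ - xⱼ|) is positive semidefinite. -/
/-!
On the positive reals `min (s, t)` is the measure of `(0, s] ∩ (0, t]`, so the min kernel is a
Gram matrix of indicator functions in `L²`. Since
`exp (-|a - b|) = exp (-a) * min (exp (2a), exp (2b)) * exp (-b)`,
the matrix `(exp (-|xᵢ - xⱼ|))` is a diagonal congruence of such a min kernel.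
-/

open MeasureTheory Matrix Set

theorem Matrix.posSemidef_of_min_of_nonneg {ι : Type*} [Finite ι] {b : ι → ℝ}
    (hb : ∀ i, 0 ≤ b i) :
    (of fun i j => min (b i) (b j)).PosSemidef := by
  have hgram : (of fun i j => min (b i) (b j)) =
      of fun i j => volume.real (Ioc 0 (b i) ∩ Ioc 0 (b j)) := by
    ext i j
    rw [of_apply, of_apply, Ioc_inter_Ioc, max_self,
      Real.volume_real_Ioc_of_le (le_min (hb i) (hb j)), sub_zero]
  rw [hgram]
  exact posSemidef_matrix_measure_inter (fun _ => measurableSet_Ioc)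
    (fun _ => measure_Ioc_lt_top.ne)

theorem Real.exp_neg_abs_sub (a b : ℝ) :
    exp (-|a - b|) = exp (-a) * min (exp (2 * a)) (exp (2 * b)) * exp (-b) := by
  rw [← exp_monotone.map_min, ← exp_add, ← exp_add]
  congr 1
  rcases le_total a b with h | h
  · rw [abs_of_nonpos (by linarith), min_eq_left (by linarith)]; ring
  · rw [abs_of_nonneg (by linarith), min_eq_right (by linarith)]; ring

theorem exp_neg_abs_posDef (n : ℕ) (x : Fin n → ℝ) :
    (Matrix.of fun i j => Real.exp (-|x i - x j|)).PosSemidef := by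
  let D : Matrix (Fin n) (Fin n) ℝ := diagonal fun i => Real.exp (-x i)
  have hmin := posSemidef_of_min_of_nonneg (b := fun i => Real.exp (2 * x i))
    fun i => (Real.exp_pos _).le
  convert hmin.mul_mul_conjTranspose_same D using 1
  ext i j
  simp [D, Real.exp_neg_abs_sub]
end

section
/- For any n and any vectors x₁,…,xₘ in ℝⁿ, the m×m matrix with entries exp(-‖xᵢ - xⱼ‖₁), where ‖·‖₁ denotes the ℓ¹ norm on ℝⁿ, is positive semidefinite. -/
/-!
The kernel factors over coordinates, `exp (-‖x - y‖₁) = ∏ₖ exp (-|xₖ - yₖ|)`, so by the Schur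
product theorem it suffices to treat one coordinate. There
`exp (-|s - t|) = e⁻ˢ e⁻ᵗ min (e²ˢ) (e²ᵗ)` is the Hadamard product of a rank-one matrix with a
matrix `min (aᵢ) (aⱼ)`, `aᵢ ≥ 0`, which is the Gram matrix of the indicators of `(0, aᵢ]` in `L²(ℝ)`.
-/

open MeasureTheory Set
open scoped ComplexOrder

namespace Matrix

theorem posSemidef_min_of_nonneg {ι : Type*} [Finite ι] (a : ι → ℝ) (ha : ∀ i, 0 ≤ a i) :
    (of fun i j => min (a i) (a j)).PosSemidef := by
  let indicatorLp (i : ι) : Lp ℝ 2 (volume : Measure ℝ) :=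
    indicatorConstLp 2 measurableSet_Ioc measure_Ioc_lt_top.ne (1 : ℝ) (s := Ioc 0 (a i))
  have h_gram : (of fun i j => min (a i) (a j)) = gram ℝ indicatorLp := by
    ext i j
    rw [gram_apply, L2.inner_indicatorConstLp_one_indicatorConstLp_one _ _ measure_Ioc_lt_top.ne
      measure_Ioc_lt_top.ne, Ioc_inter_Ioc, max_self,
      Real.volume_real_Ioc_of_le (le_min (ha i) (ha j)), sub_zero, of_apply,
      RCLike.ofReal_real_eq_id, id]
  exact h_gram ▸ posSemidef_gram ℝ indicatorLp

theorem posSemidef_exp_neg_abs_sub {ι : Type*} [Finite ι] (s : ι → ℝ) :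
    (of fun i j => Real.exp (-|s i - s j|)).PosSemidef := by
  have h_factor (a b : ℝ) : Real.exp (-|a - b|)
      = Real.exp (-a) * Real.exp (-b) * min (Real.exp (2 * a)) (Real.exp (2 * b)) := by
    rw [← Real.exp_monotone.map_min, ← Real.exp_add, ← Real.exp_add]
    congr 1
    rcases le_total a b with h | h
    · rw [min_eq_left (by linarith), abs_of_nonpos (by linarith)]; ring
    · rw [min_eq_right (by linarith), abs_of_nonneg (by linarith)]; ring
  have h_hadamard : (of fun i j => Real.exp (-|s i - s j|)) =
      vecMulVec (fun i => Real.exp (-s i)) (fun i => Real.exp (-s i)) ⊙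
        of fun i j => min (Real.exp (2 * s i)) (Real.exp (2 * s j)) := by
    ext i j
    simp only [of_apply, h_factor, hadamard_apply, vecMulVec_apply]
  rw [h_hadamard]
  exact (posSemidef_vecMulVec_self_star _).hadamard
    (posSemidef_min_of_nonneg _ fun i => (Real.exp_pos _).le)

theorem posSemidef_prod_hadamard {𝕜 ι κ : Type*} [RCLike 𝕜] [Finite ι] (s : Finset κ)
    (A : κ → Matrix ι ι 𝕜) (hA : ∀ k ∈ s, (A k).PosSemidef) :
    (of fun i j => ∏ k ∈ s, A k i j).PosSemidef := by
  classical
  induction s using Finset.induction with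
  | empty =>
    have h_ones : (of fun (_ _ : ι) => (1 : 𝕜)) = vecMulVec 1 (star 1) := by ext; simp
    simpa [h_ones] using posSemidef_vecMulVec_self_star (1 : ι → 𝕜)
  | insert k s hk ih =>
    rw [Finset.forall_mem_insert] at hA
    convert hA.1.hadamard (ih hA.2) using 1
    ext i j
    simp [Finset.prod_insert hk]

end Matrix

theorem exp_neg_l1_norm_posSemidef (n m : ℕ) (x : Fin m → Fin n → ℝ) :
    (Matrix.of fun i j => Real.exp (-(∑ k, |x i k - x j k|))).PosSemidef := by
  simp_rw [← Finset.sum_neg_distrib, Real.exp_sum]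
  exact Matrix.posSemidef_prod_hadamard _ _ fun k _ =>
    Matrix.posSemidef_exp_neg_abs_sub fun i => x i k
end

section
/- For any measure space (Ω, μ) and any finite family f₁,…,fₙ of real-valued integrable functions, the n×n matrix with entries exp(-‖fᵢ - fⱼ‖₁), where ‖·‖₁ is the L¹ norm, is positive semidefinite. -/
/-!
Since `|x| + |y| - |x - y| = 2 λ([0, x] ∩ [0, y])`, the kernel `|x i| + |x j| - |x i - x j|` is a
Gram matrix of indicators in `L²(λ)`, and integrating over `ω` shows that
`B i j = ‖f i‖₁ + ‖f j‖₁ - ‖f i - f j‖₁` is positive semidefinite. By Schur's product theorem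
every Hadamard power of `B` is, hence so is the entrywise exponential of `B` (a convergent series
of them), and `exp (-‖f i - f j‖₁) = exp (-‖f i‖₁) exp (-‖f j‖₁) exp (B i j)` is its Hadamard
product with a rank-one positive semidefinite matrix.
-/

open MeasureTheory Matrix Set

theorem Matrix.PosSemidef.of_hasSum {ι n : Type*} [Fintype n] {A : ι → Matrix n n ℝ}
    {M : Matrix n n ℝ} (hA : HasSum A M) (h : ∀ k, (A k).PosSemidef) : M.PosSemidef := by
  refine .of_dotProduct_mulVec_nonneg ?_ fun x => ?_
  · have hAT := hA.matrix_conjTranspose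
    simp only [fun k => (h k).isHermitian.eq] at hAT
    exact hAT.unique hA
  · have hentry i j : HasSum (fun k => A k i j) (M i j) := Pi.hasSum.mp (Pi.hasSum.mp hA i) j
    have hform : HasSum (fun k => star x ⬝ᵥ (A k *ᵥ x)) (star x ⬝ᵥ (M *ᵥ x)) := by
      simp only [dotProduct, mulVec]
      exact hasSum_sum fun i _ => (hasSum_sum fun j _ => (hentry i j).mul_right (x j)).mul_left _
    exact hform.nonneg fun k => (h k).dotProduct_mulVec_nonneg x

theorem Matrix.PosSemidef.map_pow {n : Type*} [Fintype n] {M : Matrix n n ℝ} (hM : M.PosSemidef)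
    (m : ℕ) : (M.map (· ^ m)).PosSemidef := by
  induction m with
  | zero => simpa [vecMulVec, Matrix.map] using posSemidef_vecMulVec_self_star (1 : n → ℝ)
  | succ m ih =>
    have hsucc : M.map (· ^ (m + 1)) = M.map (· ^ m) ⊙ M := by
      ext i j
      simp [pow_succ]
    rw [hsucc]
    exact ih.hadamard hM

theorem Matrix.PosSemidef.map_exp {n : Type*} [Fintype n] {M : Matrix n n ℝ} (hM : M.PosSemidef) :
    (M.map Real.exp).PosSemidef := by
  refine .of_hasSum (A := fun m => (m.factorial⁻¹ : ℝ) • M.map (· ^ m)) ?_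
    fun m => (hM.map_pow m).smul (by positivity)
  refine Pi.hasSum.mpr fun i => Pi.hasSum.mpr fun j => ?_
  simpa [Real.exp_eq_exp_ℝ, NormedSpace.exp_eq_tsum_div, div_eq_inv_mul] using
    (NormedSpace.expSeries_div_hasSum_exp (M i j))

theorem Matrix.PosSemidef.integral {α n : Type*} [MeasurableSpace α] {μ : Measure α} [Fintype n]
    {A : α → Matrix n n ℝ} (hA : ∀ i j, Integrable (fun a => A a i j) μ)
    (h : ∀ᵐ a ∂μ, (A a).PosSemidef) : (Matrix.of fun i j => ∫ a, A a i j ∂μ).PosSemidef := by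
  refine .of_dotProduct_mulVec_nonneg ?_ fun x => ?_
  · ext i j
    simp only [conjTranspose_apply, of_apply, star_trivial]
    refine integral_congr_ae ?_
    filter_upwards [h] with a ha using ha.isHermitian.apply i j
  · have hform : star x ⬝ᵥ (Matrix.of fun i j => ∫ a, A a i j ∂μ) *ᵥ x
        = ∫ a, star x ⬝ᵥ (A a *ᵥ x) ∂μ := by
      simp only [dotProduct, mulVec, of_apply, Finset.mul_sum]
      rw [integral_finsetSum _ fun i _ => integrable_finsetSum _ fun j _ =>
        ((hA i j).mul_const _).const_mul _]
      refine Finset.sum_congr rfl fun i _ => ?_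
      rw [integral_finsetSum _ fun j _ => ((hA i j).mul_const _).const_mul _]
      simp only [integral_const_mul, integral_mul_const]
    rw [hform]
    exact integral_nonneg_of_ae <| h.mono fun a ha => ha.dotProduct_mulVec_nonneg x

theorem abs_add_abs_sub_abs_sub_eq_two_mul_volume_uIcc_inter (x y : ℝ) :
    |x| + |y| - |x - y| = 2 * volume.real (uIcc 0 x ∩ uIcc 0 y) := by
  simp only [uIcc, Icc_inter_Icc, Real.volume_real_Icc]
  grind

theorem posSemidef_abs_add_abs_sub_abs_sub {n : Type*} [Fintype n] (x : n → ℝ) :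
    (Matrix.of fun i j => |x i| + |x j| - |x i - x j|).PosSemidef := by
  simp only [abs_add_abs_sub_abs_sub_eq_two_mul_volume_uIcc_inter]
  exact (posSemidef_matrix_measure_inter (μ := volume) (fun _ => measurableSet_uIcc)
    fun _ => isCompact_uIcc.measure_ne_top).smul (zero_le_two (α := ℝ))

theorem posSemidef_integral_abs_add_integral_abs_sub_integral_abs_sub {Ω n : Type*}
    [MeasurableSpace Ω] {μ : Measure Ω} [Fintype n] {f : n → Ω → ℝ}
    (hf : ∀ i, Integrable (f i) μ) :
    (Matrix.of fun i j =>
      ∫ ω, |f i ω| ∂μ + ∫ ω, |f j ω| ∂μ - ∫ ω, |f i ω - f j ω| ∂μ).PosSemidef := by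
  have hsplit i j : ∫ ω, |f i ω| + |f j ω| - |f i ω - f j ω| ∂μ
      = ∫ ω, |f i ω| ∂μ + ∫ ω, |f j ω| ∂μ - ∫ ω, |f i ω - f j ω| ∂μ := by
    rw [integral_sub ((hf i).abs.fun_add (hf j).abs) ((hf i).sub' (hf j)).abs,
      integral_add (hf i).abs (hf j).abs]
  simpa only [of_apply, hsplit] using
    PosSemidef.integral (A := fun ω => .of fun i j => |f i ω| + |f j ω| - |f i ω - f j ω|)
      (fun i j => ((hf i).abs.add (hf j).abs).sub ((hf i).sub (hf j)).abs)
      (ae_of_all _ fun ω => posSemidef_abs_add_abs_sub_abs_sub (f · ω))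

theorem exp_neg_L1_dist_posSemidef {Ω : Type*} [MeasurableSpace Ω]
    (μ : Measure Ω) (n : ℕ) (f : Fin n → Ω → ℝ)
    (hf : ∀ i, Integrable (f i) μ) :
    (Matrix.of fun i j =>
      Real.exp (-(∫ ω, |f i ω - f j ω| ∂μ))).PosSemidef := by
  set e : Fin n → ℝ := fun i => ∫ ω, |f i ω| ∂μ
  have hB := posSemidef_integral_abs_add_integral_abs_sub_integral_abs_sub hf
  have hK : (Matrix.of fun i j => Real.exp (-(∫ ω, |f i ω - f j ω| ∂μ))) =
      vecMulVec (fun i => Real.exp (-e i)) (star fun i => Real.exp (-e i)) ⊙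
        (Matrix.of fun i j => e i + e j - ∫ ω, |f i ω - f j ω| ∂μ).map Real.exp := by
    ext i j
    simp only [of_apply, hadamard_apply, vecMulVec_apply, map_apply, star_trivial, ← Real.exp_add]
    ring_nf
  rw [hK]
  exact (posSemidef_vecMulVec_self_star _).hadamard hB.map_exp
end

section
/- Let p : E → F be a continuous linear surjection between Banach spaces. Then there exists a continuous (not necessarily linear) map s : F → E with p ∘ s = id on F. -/
/-!
Open mapping gives a constant `C` such that every `y` has a preimage of norm at most `C‖y‖`.
Gluing such constant local preimages with a partition of unity (the target sets are convex)
lifts any continuous map `f : X → F` up to an error `ε`, with norm bound `C‖f‖ + ε`. Iterating on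
the error with `ε = 2⁻ⁿ` produces a uniformly convergent series whose sum is an exact continuous
lift; Bartle–Graves is the case `f = id`.
-/

open Function Filter Topology

section Telescoping

variable {R E F : Type*} [Semiring R] [AddCommGroup E] [TopologicalSpace E] [Module R E]
  [AddCommGroup F] [TopologicalSpace F] [IsTopologicalAddGroup F] [T2Space F] [Module R F]

theorem ContinuousLinearMap.map_tsum_eq_of_telescoping (p : E →L[R] F) {e : ℕ → E} {r : ℕ → F}
    (he : Summable e) (hpe : ∀ n, p (e n) = r n - r (n + 1)) (hr : Tendsto r atTop (𝓝 0)) :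
    p (∑' n, e n) = r 0 := by
  have htel : Tendsto (fun N => ∑ n ∈ Finset.range N, p (e n)) atTop (𝓝 (r 0)) := by
    simp_rw [hpe, Finset.sum_range_sub']
    simpa using tendsto_const_nhds.sub hr
  exact tendsto_nhds_unique (he.hasSum.mapL p).tendsto_sum_nat htel

end Telescoping

section Lift

variable {X E F : Type*} [TopologicalSpace X] [NormalSpace X] [ParacompactSpace X]
  [NormedAddCommGroup E] [NormedSpace ℝ E] [NormedAddCommGroup F] [NormedSpace ℝ F]

theorem ContinuousLinearMap.exists_continuous_approx_lift (p : E →L[ℝ] F) {C : ℝ}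
    (hC : ∀ y, ∃ e, p e = y ∧ ‖e‖ ≤ C * ‖y‖) (f : C(X, F)) {ε : ℝ} (hε : 0 < ε) :
    ∃ g : C(X, E), ∀ x, ‖f x - p (g x)‖ < ε ∧ ‖g x‖ < C * ‖f x‖ + ε := by
  have hconvex : ∀ x, Convex ℝ {e : E | ‖f x - p e‖ < ε ∧ ‖e‖ < C * ‖f x‖ + ε} := by
    intro x
    have : {e : E | ‖f x - p e‖ < ε ∧ ‖e‖ < C * ‖f x‖ + ε} =
        p ⁻¹' Metric.ball (f x) ε ∩ Metric.ball 0 (C * ‖f x‖ + ε) := by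
      ext e
      simp [dist_eq_norm, norm_sub_rev]
    rw [this]
    exact ((convex_ball _ _).linear_preimage p.toLinearMap).inter (convex_ball _ _)
  refine exists_continuous_forall_mem_convex_of_local_const hconvex fun x₀ => ?_
  obtain ⟨e, hpe, hne⟩ := hC (f x₀)
  refine ⟨e, ?_⟩
  have hnear : ∀ᶠ x in 𝓝 x₀, f x ∈ Metric.ball (f x₀) ε :=
    f.continuous.continuousAt (Metric.ball_mem_nhds _ hε)
  have hbound : ∀ᶠ x in 𝓝 x₀, C * ‖f x₀‖ < C * ‖f x‖ + ε :=
    ((continuous_const.mul f.continuous.norm).add continuous_const).continuousAt.eventually_const_lt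
      (lt_add_of_pos_right _ hε)
  filter_upwards [hnear, hbound] with x hx hxb
  refine ⟨?_, hne.trans_lt hxb⟩
  rwa [hpe, ← dist_eq_norm]

theorem ContinuousLinearMap.exists_continuous_lift [CompleteSpace E] [CompleteSpace F]
    (p : E →L[ℝ] F) (hp : Surjective p) (f : C(X, F)) :
    ∃ g : C(X, E), ∀ x, p (g x) = f x := by
  obtain ⟨C, hC0, hC⟩ := p.exists_preimage_norm_le hp
  choose lift hlift using fun (h : C(X, F)) (n : ℕ) =>
    p.exists_continuous_approx_lift hC h (pow_pos one_half_pos n)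
  -- `r n` is the part of `f` still to be lifted after `n` steps.
  let r : ℕ → C(X, F) := fun n => Nat.rec f (fun k h => h - (p : C(E, F)).comp (lift h k)) n
  let g : ℕ → C(X, E) := fun n => lift (r n) n
  have hpg : ∀ n x, p (g n x) = r n x - r (n + 1) x := fun n x => by simp [r, g]
  have hr : ∀ n x, ‖r (n + 1) x‖ < (1 / 2) ^ n := fun n x => (hlift (r n) n x).1
  have hg : ∀ n x, ‖g (n + 1) x‖ ≤ (C + 1) * (1 / 2) ^ n := fun n x =>
    calc ‖g (n + 1) x‖ ≤ C * ‖r (n + 1) x‖ + (1 / 2) ^ (n + 1) := (hlift _ _ x).2.le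
      _ ≤ C * (1 / 2) ^ n + (1 / 2) ^ n := by
        gcongr ?_ + ?_
        · exact mul_le_mul_of_nonneg_left (hr n x).le hC0.le
        · exact pow_le_pow_of_le_one (by norm_num) (by norm_num) n.le_succ
      _ = (C + 1) * (1 / 2) ^ n := by ring
  have hsum : Summable fun n => (C + 1) * (1 / 2 : ℝ) ^ n :=
    summable_geometric_two.mul_left _
  -- `g 0` is split off since only the later terms are uniformly bounded.
  refine ⟨⟨fun x => g 0 x + ∑' n, g (n + 1) x,
    (g 0).continuous.add (continuous_tsum (fun n => (g (n + 1)).continuous) hsum hg)⟩, fun x => ?_⟩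
  have hr0 : Tendsto (fun n => r (n + 1) x) atTop (𝓝 0) :=
    squeeze_zero_norm (fun n => (hr n x).le) (tendsto_pow_atTop_nhds_zero_of_lt_one
      (by norm_num) (by norm_num))
  have htail : p (∑' n, g (n + 1) x) = r 1 x :=
    p.map_tsum_eq_of_telescoping (.of_norm_bounded hsum (fun n => hg n x))
      (fun n => hpg (n + 1) x) hr0
  change p (g 0 x + _) = f x
  rw [map_add, htail, hpg 0 x, zero_add, sub_add_cancel]
  rfl

end Lift

/-- The Bartle–Graves theorem: a continuous linear surjection between Banach spaces
admits a continuous (not necessarily linear) right inverse. -/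
theorem bartle_graves {E F : Type*} [NormedAddCommGroup E] [NormedSpace ℝ E]
    [CompleteSpace E] [NormedAddCommGroup F] [NormedSpace ℝ F] [CompleteSpace F]
    (p : E →L[ℝ] F) (hp : Function.Surjective p) :
    ∃ s : F → E, Continuous s ∧ ∀ y : F, p (s y) = y := by
  obtain ⟨s, hs⟩ := p.exists_continuous_lift hp (ContinuousMap.id F)
  exact ⟨s, s.continuous, hs⟩
end

section
/- For strictly positive reals m₁,…,mₙ, the function x ↦ exp(-Σₖ mₖ|xₖ|) on ℝⁿ is positive definite: for any vectors x⁽¹⁾,…,x⁽ᵐ⁾ ∈ ℝⁿ, the matrix with entries exp(-Σₖ mₖ|xᵢ⁽ᵏ⁾ - xⱼ⁽ᵏ⁾|) is positive semidefinite. -/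
/-!
Since `|a - b| = a + b - 2 min a b`, the entry `exp (-∑ₖ mₖ |xᵢₖ - xⱼₖ|)` equals
`cᵢ cⱼ ∏ₖ min (sᵢₖ) (sⱼₖ)` with `cᵢ = exp (-∑ₖ mₖ xᵢₖ)` and `sᵢₖ = exp (2 mₖ xᵢₖ)`, using that
`t ↦ exp (2 mₖ t)` is monotone. The product of minima is the volume of the intersection of the
boxes `∏ₖ (0, sᵢₖ)`, so the matrix is the Gram matrix of the functions `cᵢ 𝟙_{boxᵢ}` in `L²`.
-/

open MeasureTheory Set

theorem Matrix.posSemidef_measureReal_inter {ι α : Type*} [Finite ι] [MeasurableSpace α]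
    (μ : Measure α) (B : ι → Set α) (hB : ∀ i, MeasurableSet (B i)) (hμB : ∀ i, μ (B i) ≠ ⊤)
    (c : ι → ℝ) : (Matrix.of fun i j => c i * c j * μ.real (B i ∩ B j)).PosSemidef := by
  have hgram : (Matrix.of fun i j => c i * c j * μ.real (B i ∩ B j))
      = gram ℝ fun i => indicatorConstLp 2 (hB i) (hμB i) (c i) := by
    ext i j
    simp [L2.inner_indicatorConstLp_indicatorConstLp, mul_comm]
  rw [hgram]
  exact posSemidef_gram ℝ _

theorem Matrix.posSemidef_prod_min {ι κ : Type*} [Finite ι] [Fintype κ] (s : ι → κ → ℝ)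
    (hs : ∀ i, 0 ≤ s i) (c : ι → ℝ) :
    (Matrix.of fun i j => c i * c j * ∏ k, min (s i k) (s j k)).PosSemidef := by
  let B i : Set (κ → ℝ) := pi univ fun k => Ioo 0 (s i k)
  have hinter i j : B i ∩ B j = pi univ fun k => Ioo 0 (min (s i k) (s j k)) := by
    simp only [B, ← pi_inter_distrib, Ioo_inter_Ioo, max_self]
  have hprod i j : ∏ k, min (s i k) (s j k) = volume.real (B i ∩ B j) := by
    rw [hinter, measureReal_def,
      Real.volume_pi_Ioo_toReal (a := fun _ => 0) fun k => le_min (hs i k) (hs j k)]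
    simp
  have hfinite i : volume (B i) ≠ ⊤ := by
    simpa [B, Real.volume_pi_Ioo] using ENNReal.prod_ne_top fun _ _ => ENNReal.ofReal_ne_top
  simp_rw [hprod]
  exact posSemidef_measureReal_inter volume B
    (fun i => MeasurableSet.univ_pi fun _ => measurableSet_Ioo) hfinite c

theorem Real.exp_neg_mul_abs_sub {m : ℝ} (hm : 0 ≤ m) (a b : ℝ) :
    exp (-(m * |a - b|)) =
      exp (-(m * a)) * exp (-(m * b)) * min (exp (2 * m * a)) (exp (2 * m * b)) := by
  rw [← exp_monotone.map_min, ← mul_min_of_nonneg _ _ (by positivity), ← exp_add, ← exp_add,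
    ← max_sub_min_eq_abs']
  congr 1
  linear_combination -m * min_add_max a b

theorem exp_neg_weighted_l1_posSemidef (n M : ℕ) (m : Fin n → ℝ)
    (hm : ∀ k, 0 < m k) (x : Fin M → Fin n → ℝ) :
    (Matrix.of fun i j =>
      Real.exp (-(∑ k, m k * |x i k - x j k|))).PosSemidef := by
  have hentry i j : Real.exp (-(∑ k, m k * |x i k - x j k|)) =
      Real.exp (-∑ k, m k * x i k) * Real.exp (-∑ k, m k * x j k) *
        ∏ k, min (Real.exp (2 * m k * x i k)) (Real.exp (2 * m k * x j k)) := by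
    simp only [← Finset.sum_neg_distrib, Real.exp_sum, ← Finset.prod_mul_distrib,
      Real.exp_neg_mul_abs_sub (hm _).le]
  simp_rw [hentry]
  exact Matrix.posSemidef_prod_min _ (fun _ _ => (Real.exp_pos _).le) _
end
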